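/- Let I be a left rooted quiver, A a Grothendieck category, and (Q, W, R) a Hovey triple in A with Q̃ = Q ∩ W. Assume Q̃ is closed under small coproducts. Then Φ(Q̃) = Φ(Q) ∩ Rep(I, W), where Φ(X) denotes the class of representations M such that φ_i^M is a monomorphism with cokernel in X for every vertex i. -/

import Mathlib

/-!
Both inclusions are proved by transfinite induction along the root filtration of `I`. At a
vertex `i`, if every predecessor `M_j` lies in `Q̃`, then so does `⨁ M_{s(a)}` by hypothesis, and
the short exact sequence `0 → ⨁ M_{s(a)} → M_i → coker φ_i → 0` puts `M_i` in `Q` (resp. `W`),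
because the left class of a cotorsion pair and the thick class `W` are closed under extensions.
Thickness of `W` then also puts `coker φ_i` in `W` once `M_i` and `⨁ M_{s(a)}` are in `W`.

Closure of `⊥F = {A | Ext¹(A, F) = 0}` under extensions `0 → X → Y → Z → 0` is shown by hand:
an extension `0 → B → E → Y → 0` restricts over `X` to a split one, giving `σ : X → E`, and
`E/σ(X)` is an extension of `Z` by `B`, whose splitting splits `E`.
-/

open CategoryTheory CategoryTheory.Limits

universe v u

namespace Paper

variable {C : Type u} [Category.{v} C] [Abelian C]

/-- `Ext¹(A, B) = 0`, expressed by the property that every short exact sequence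
`0 → B → E → A → 0` splits. -/
def Ext1Zero (A B : C) : Prop :=
  ∀ ⦃E : C⦄ (i : B ⟶ E) (p : E ⟶ A) (w : i ≫ p = 0),
    Mono i → Epi p → (ShortComplex.mk i p w).Exact → ∃ r : E ⟶ B, i ≫ r = 𝟙 B

/-- `0 → X → Y → Z → 0` is a short exact sequence. -/
def IsSES {X Y Z : C} (i : X ⟶ Y) (p : Y ⟶ Z) : Prop :=
  Mono i ∧ Epi p ∧ ∃ w : i ≫ p = 0, (ShortComplex.mk i p w).Exact

/-- `(Q, F)` is a cotorsion pair: `Q^⊥ = F` and `^⊥F = Q` with respect to `Ext¹`. -/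
structure CotorsionPair (Q F : C → Prop) : Prop where
  right_eq : ∀ B, F B ↔ ∀ A, Q A → Ext1Zero A B
  left_eq : ∀ A, Q A ↔ ∀ B, F B → Ext1Zero A B

/-- Completeness of a cotorsion pair: every object admits approximations on both sides. -/
def CompletePair (Q F : C → Prop) : Prop :=
  ∀ M : C,
    (∃ (D E : C) (i : D ⟶ E) (p : E ⟶ M), IsSES i p ∧ F D ∧ Q E) ∧
    (∃ (D' E' : C) (i : M ⟶ D') (p : D' ⟶ E'), IsSES i p ∧ F D' ∧ Q E')

/-- `Q` is closed under kernels of epimorphisms between objects of `Q`. -/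
def Resolving (Q : C → Prop) : Prop :=
  ∀ ⦃X Y Z : C⦄ (i : X ⟶ Y) (p : Y ⟶ Z), IsSES i p → Q Y → Q Z → Q X

/-- `F` is closed under cokernels of monomorphisms between objects of `F`. -/
def Coresolving (F : C → Prop) : Prop :=
  ∀ ⦃X Y Z : C⦄ (i : X ⟶ Y) (p : Y ⟶ Z), IsSES i p → F X → F Y → F Z

/-- A thick subcategory: closed under direct summands, extensions, kernels of
epimorphisms and cokernels of monomorphisms. -/
structure Thick (W : C → Prop) : Prop where
  retract : ∀ ⦃X Y : C⦄ (s : X ⟶ Y) (r : Y ⟶ X), s ≫ r = 𝟙 X → W Y → W X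
  extensions : ∀ ⦃X Y Z : C⦄ (i : X ⟶ Y) (p : Y ⟶ Z), IsSES i p → W X → W Z → W Y
  ker_of_epi : ∀ ⦃X Y Z : C⦄ (i : X ⟶ Y) (p : Y ⟶ Z), IsSES i p → W Y → W Z → W X
  coker_of_mono : ∀ ⦃X Y Z : C⦄ (i : X ⟶ Y) (p : Y ⟶ Z), IsSES i p → W X → W Y → W Z

/-- A Hovey triple `(Q, W, R)`: `W` is thick and both `(Q, W ∩ R)` and `(Q ∩ W, R)`
are complete cotorsion pairs. -/
structure HoveyTriple (Q W R : C → Prop) : Prop where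
  thick : Thick W
  cp₁ : CotorsionPair Q (fun X => W X ∧ R X)
  complete₁ : CompletePair Q (fun X => W X ∧ R X)
  cp₂ : CotorsionPair (fun X => Q X ∧ W X) R
  complete₂ : CompletePair (fun X => Q X ∧ W X) R

/-- `(Q, W, R)` is a hereditary Hovey triple. -/
def HereditaryHoveyTriple (Q W R : C → Prop) : Prop :=
  HoveyTriple Q W R ∧
    (Resolving Q ∧ Coresolving (fun X => W X ∧ R X)) ∧
    (Resolving (fun X => Q X ∧ W X) ∧ Coresolving R)

end Paper

namespace Paper

open CategoryTheory CategoryTheory.Limits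

noncomputable def rootFiltration (V : Type v) [Quiver V] (χ : Ordinal.{v}) : Set V :=
  Ordinal.limitRecOn χ
    (∅ : Set V)
    (fun _ W => W ∪ { i : V | ∀ ⦃j : V⦄, (j ⟶ i) → j ∈ W })
    (fun χ' _ ih => ⋃ (μ : Ordinal.{v}) (h : μ < χ'), ih μ h)

/-- A quiver is left rooted if the transfinite sequence `V_χ` exhausts all the vertices. -/
def IsLeftRooted (V : Type v) [Quiver V] : Prop :=
  ∃ lam : Ordinal.{v}, rootFiltration V lam = Set.univ

variable {V : Type v} [Quiver.{v} V] {A : Type u} [Category.{v} A] [Abelian A]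
  [HasColimits A]

/-- The canonical map `φᵢᴹ : ⨁_{a ∈ I(•,i)} M_{s(a)} ⟶ M_i` for a representation
`M : Paths V ⥤ A` of the quiver `V` in `A`. -/
noncomputable def phiRep (M : Paths V ⥤ A) (i : V) :
    (∐ fun p : Σ j : V, j ⟶ i => M.obj ((Paths.of V).obj p.1)) ⟶ M.obj ((Paths.of V).obj i) :=
  Sigma.desc fun p => M.map p.2.toPath

/-- `Φ(Q)`: representations `M` such that each `φᵢᴹ` is a monomorphism with cokernel
in `Q`. -/
def PhiClass (Q : A → Prop) (M : Paths V ⥤ A) : Prop :=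
  ∀ i : V, Mono (phiRep M i) ∧ Q (cokernel (phiRep M i))

/-- The class of representations belonging to `W` at every vertex. -/
def VertexwiseClass (W : A → Prop) (M : Paths V ⥤ A) : Prop :=
  ∀ i : V, W (M.obj ((Paths.of V).obj i))

end Paper

namespace Paper

open CategoryTheory CategoryTheory.Limits

section Extensions

variable {C : Type u} [Category.{v} C] [Abelian C]

lemma isSES_cokernel {X Y : C} (f : X ⟶ Y) [Mono f] : IsSES f (cokernel.π f) :=
  ⟨inferInstance, inferInstance, cokernel.condition f,
    ShortComplex.exact_of_g_is_cokernel _ (cokernelIsCokernel f)⟩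

lemma Ext1Zero.exists_retraction {A B E : C} (hAB : Ext1Zero A B) {i : B ⟶ E} {p : E ⟶ A}
    (hip : IsSES i p) : ∃ r : E ⟶ B, i ≫ r = 𝟙 B :=
  hAB i p hip.2.2.1 hip.1 hip.2.1 hip.2.2.2

lemma Ext1Zero.exists_section {A B E : C} (hAB : Ext1Zero A B) {i : B ⟶ E} {p : E ⟶ A}
    (hip : IsSES i p) : ∃ s : A ⟶ E, s ≫ p = 𝟙 A := by
  obtain ⟨r, hr⟩ := hAB.exists_retraction hip
  exact ⟨_, (ShortComplex.Splitting.ofExactOfRetraction _ hip.2.2.2 r hr hip.2.1).s_g⟩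

lemma isSES_pullback_snd {B E X Y : C} {i : B ⟶ E} {p : E ⟶ Y} (hip : IsSES i p) (g : X ⟶ Y) :
    IsSES (pullback.lift i 0 (by rw [hip.2.2.1, zero_comp]) : B ⟶ pullback p g)
      (pullback.snd p g) := by
  obtain ⟨hi, hp, w, hexact⟩ := hip
  refine ⟨mono_of_mono_fac (pullback.lift_fst _ _ _), inferInstance, pullback.lift_snd _ _ _, ?_⟩
  rw [ShortComplex.exact_iff_exact_up_to_refinements]
  intro T x hx
  have hxp : (x ≫ pullback.fst p g) ≫ p = 0 := by
    rw [Category.assoc, pullback.condition, ← Category.assoc, hx, zero_comp]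
  obtain ⟨T', π, hπ, b, hb⟩ := hexact.exact_up_to_refinements _ hxp
  refine ⟨T', π, hπ, b, pullback.hom_ext ?_ ?_⟩
  · rw [Category.assoc, Category.assoc, pullback.lift_fst]
    exact hb
  · rw [Category.assoc, Category.assoc, pullback.lift_snd, comp_zero]
    exact (π ≫= hx).trans comp_zero

lemma Ext1Zero.exists_lift {B E X Y : C} (hXB : Ext1Zero X B) {i : B ⟶ E} {p : E ⟶ Y}
    (hip : IsSES i p) (g : X ⟶ Y) : ∃ σ : X ⟶ E, σ ≫ p = g := by
  obtain ⟨s, hs⟩ := hXB.exists_section (isSES_pullback_snd hip g)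
  exact ⟨s ≫ pullback.fst p g, by rw [Category.assoc, pullback.condition, ← Category.assoc, hs,
    Category.id_comp]⟩

lemma isSES_cokernel_of_lift {B E X Y Z : C} {i : X ⟶ Y} {q : Y ⟶ Z} (hiq : IsSES i q)
    {iB : B ⟶ E} {p : E ⟶ Y} (hp : IsSES iB p) {σ : X ⟶ E} (hσ : σ ≫ p = i) :
    IsSES (iB ≫ cokernel.π σ)
      (cokernel.desc σ (p ≫ q) (by rw [← Category.assoc, hσ, hiq.2.2.1])) := by
  obtain ⟨hi, hq, wiq, hexact⟩ := hiq
  obtain ⟨hiB, hp, wp, hpexact⟩ := hp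
  refine ⟨Preadditive.mono_of_cancel_zero _ fun {T} x hx => ?_,
    epi_of_epi_fac (cokernel.π_desc _ _ _), by simp [reassoc_of% wp], ?_⟩
  · obtain ⟨T', π, hπ, y, hy⟩ := (CokernelCofork.IsColimit.comp_π_eq_zero_iff_up_to_refinements
      (cokernelIsCokernel σ) (x ≫ iB)).1 (by simpa using hx)
    have hy0 : y = 0 := by
      rw [← cancel_mono i, ← hσ, ← Category.assoc, ← hy]
      simp [wp]
    rw [← cancel_epi π, ← cancel_mono iB]
    simp [hy, hy0]
  · rw [ShortComplex.exact_iff_exact_up_to_refinements]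
    intro T x hx
    obtain ⟨T₁, π₁, hπ₁, e, he⟩ := surjective_up_to_refinements_of_epi (cokernel.π σ) x
    have hepq : (e ≫ p) ≫ q = 0 := by
      simpa [reassoc_of% he] using π₁ ≫= hx
    obtain ⟨T₂, π₂, hπ₂, y, hy⟩ := hexact.exact_up_to_refinements _ hepq
    have hker : (π₂ ≫ e - y ≫ σ) ≫ p = 0 := by
      simp only [Preadditive.sub_comp, Category.assoc, hσ]
      exact sub_eq_zero.2 hy
    obtain ⟨T₃, π₃, hπ₃, b, hb⟩ := hpexact.exact_up_to_refinements _ hker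
    refine ⟨T₃, π₃ ≫ π₂ ≫ π₁, inferInstance, b, ?_⟩
    simpa [he] using hb =≫ cokernel.π σ

lemma Ext1Zero.of_isSES {B X Y Z : C} {i : X ⟶ Y} {q : Y ⟶ Z} (hiq : IsSES i q)
    (hX : Ext1Zero X B) (hZ : Ext1Zero Z B) : Ext1Zero Y B := by
  intro E iB p w hiB hp hexact
  have hses : IsSES iB p := ⟨hiB, hp, w, hexact⟩
  obtain ⟨σ, hσ⟩ := hX.exists_lift hses i
  obtain ⟨r, hr⟩ := hZ.exists_retraction (isSES_cokernel_of_lift hiq hses hσ)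
  exact ⟨cokernel.π σ ≫ r, by rw [← Category.assoc, hr]⟩

lemma CotorsionPair.left_of_isSES {Q F : C → Prop} (hQF : CotorsionPair Q F)
    {X Y Z : C} {i : X ⟶ Y} {q : Y ⟶ Z} (hiq : IsSES i q) (hX : Q X) (hZ : Q Z) : Q Y :=
  (hQF.left_eq Y).2 fun B hB =>
    ((hQF.left_eq X).1 hX B hB).of_isSES hiq ((hQF.left_eq Z).1 hZ B hB)

end Extensions

section LeftRooted

lemma rootFiltration_zero (V : Type v) [Quiver V] : rootFiltration V 0 = ∅ :=
  Ordinal.limitRecOn_zero _ _ _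

lemma rootFiltration_add_one (V : Type v) [Quiver V] (χ : Ordinal.{v}) :
    rootFiltration V (χ + 1) =
      rootFiltration V χ ∪ { i : V | ∀ ⦃j : V⦄, (j ⟶ i) → j ∈ rootFiltration V χ } :=
  Ordinal.limitRecOn_add_one _ _ _ _

lemma rootFiltration_limit (V : Type v) [Quiver V] {χ : Ordinal.{v}} (h : Order.IsSuccLimit χ) :
    rootFiltration V χ = ⋃ (μ : Ordinal.{v}) (_ : μ < χ), rootFiltration V μ :=
  Ordinal.limitRecOn_limit _ _ _ _ h

lemma IsLeftRooted.induction {V : Type v} [Quiver.{v} V] (hV : IsLeftRooted V)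
    {P : V → Prop} (step : ∀ i : V, (∀ ⦃j : V⦄, (j ⟶ i) → P j) → P i) (i : V) : P i := by
  obtain ⟨lam, hlam⟩ := hV
  suffices h : ∀ χ : Ordinal.{v}, ∀ i ∈ rootFiltration V χ, P i from
    h lam i (hlam ▸ Set.mem_univ i)
  intro χ
  induction χ using Ordinal.limitRecOn with
  | zero => simp [rootFiltration_zero]
  | add_one μ ih =>
    intro i hi
    rw [rootFiltration_add_one] at hi
    rcases hi with hi | hi
    · exact ih i hi
    · exact step i fun j a => ih j (hi a)
  | limit χ hχ ih =>
    intro i hi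
    rw [rootFiltration_limit _ hχ] at hi
    obtain ⟨μ, hμ, hiμ⟩ := Set.mem_iUnion₂.1 hi
    exact ih μ hμ i hiμ

variable {V : Type v} [Quiver.{v} V] {A : Type u} [Category.{v} A] [HasColimits A]

lemma IsLeftRooted.vertexwiseClass {P : A → Prop} (hV : IsLeftRooted V)
    (hcoprod : ∀ (ι : Type v) (g : ι → A), (∀ x, P (g x)) → P (∐ g)) (M : Paths V ⥤ A)
    (step : ∀ i : V, P (∐ fun p : Σ j : V, j ⟶ i => M.obj ((Paths.of V).obj p.1)) →
      P (M.obj ((Paths.of V).obj i))) :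
    VertexwiseClass P M :=
  hV.induction fun i ih => step i (hcoprod _ _ fun p => ih p.2)

end LeftRooted

end Paper

open Paper CategoryTheory CategoryTheory.Limits in
theorem stmt10_general {V : Type v} [Quiver.{v} V] (hV : IsLeftRooted V)
    {A : Type u} [Category.{v} A] [Abelian A] [HasColimits A]
    (Q W R : A → Prop) (h : HoveyTriple Q W R)
    (hcoprod : ∀ (ι : Type v) (g : ι → A), (∀ x, Q (g x) ∧ W (g x)) → Q (∐ g) ∧ W (∐ g)) :
    ∀ M : Paths V ⥤ A,
      PhiClass (fun X => Q X ∧ W X) M ↔ (PhiClass Q M ∧ VertexwiseClass W M) := by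
  intro M
  constructor
  · intro hM
    have hQW : VertexwiseClass (fun X => Q X ∧ W X) M := hV.vertexwiseClass hcoprod M
      fun i hi => by
        have := (hM i).1
        exact ⟨h.cp₁.left_of_isSES (isSES_cokernel _) hi.1 (hM i).2.1,
          h.thick.extensions _ _ (isSES_cokernel _) hi.2 (hM i).2.2⟩
    exact ⟨fun i => ⟨(hM i).1, (hM i).2.1⟩, fun i => (hQW i).2⟩
  · rintro ⟨hQM, hWM⟩
    have hQW : VertexwiseClass (fun X => Q X ∧ W X) M := hV.vertexwiseClass hcoprod M
      fun i hi => by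
        have := (hQM i).1
        exact ⟨h.cp₁.left_of_isSES (isSES_cokernel _) hi.1 (hQM i).2, hWM i⟩
    intro i
    have := (hQM i).1
    exact ⟨(hQM i).1, (hQM i).2, h.thick.coker_of_mono _ _ (isSES_cokernel _)
      (hcoprod _ _ fun p => hQW _).2 (hWM i)⟩

open Paper CategoryTheory CategoryTheory.Limits in
theorem stmt10 {V : Type v} [Quiver.{v} V] (hV : IsLeftRooted V)
    {A : Type u} [Category.{v} A] [Abelian A] [HasLimits A] [HasColimits A]
    [AB5 A] [HasSeparator A]
    (Q W R : A → Prop) (h : HoveyTriple Q W R)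
    (hcoprod : ∀ (ι : Type v) (g : ι → A), (∀ x, Q (g x) ∧ W (g x)) → Q (∐ g) ∧ W (∐ g)) :
    ∀ M : Paths V ⥤ A,
      PhiClass (fun X => Q X ∧ W X) M ↔ (PhiClass Q M ∧ VertexwiseClass W M) :=
  stmt10_general hV Q W R h hcoprod
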